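/- Let (M,d) be a homogeneous metric space. Then the connected component of the identity of Iso(M,d) acts transitively on M. -/

import Mathlib

/-!
Homogeneity turns local compactness into a uniform radius `ε` such that all closed `ε`-balls are
compact. Spreading this along `ε/2`-chains (which reach everything, `M` being connected) shows that
each set `{g | d(g x, y) ≤ ε}` is compact for the pointwise topology: by Tychonoff, applied to
the pairs `(g, g⁻¹)`. Hence `Iso(M)` is a locally compact, σ-compact group whose orbit maps
`g ↦ g x` are proper, and, by the open mapping theorem for σ-compact groups acting on Baire spaces,
also open. So every clopen neighbourhood `C` of `1` satisfies `C x = M`, i.e. the compact set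
`{g | g x = y}` meets every clopen neighbourhood of `1`. In a locally compact group such a compact
set meets the identity component, because the quotient by the identity component is locally
compact and totally disconnected, hence has a basis of clopen sets.
-/

open Set Metric Topology
open scoped NNReal

section ConnectedMetric

variable {X : Type*} [PseudoMetricSpace X]

theorem eq_univ_of_forall_ball_subset [ConnectedSpace X] {S : Set X} {r : ℝ} (hr : 0 < r)
    (hS : S.Nonempty) (h : ∀ w ∈ S, ball w r ⊆ S) : S = univ := by
  refine IsClopen.eq_univ ⟨isClosed_of_closure_subset fun v hv => ?_,
    isOpen_iff.2 fun w hw => ⟨r, hr, h w hw⟩⟩ hS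
  obtain ⟨w, hwS, hvw⟩ := Metric.mem_closure_iff.1 hv r hr
  exact h w hwS (mem_ball.2 hvw)

theorem IsCompact.cthickening_of_forall_isCompact_closedBall {ε δ : ℝ}
    (hball : ∀ z : X, IsCompact (closedBall z ε)) (hδ : 0 ≤ δ) (hδε : δ < ε) {A : Set X}
    (hA : IsCompact A) : IsCompact (cthickening δ A) := by
  obtain ⟨t, -, ht, hAt⟩ := finite_cover_balls_of_compact hA (half_pos (sub_pos.2 hδε))
  refine (ht.isCompact_biUnion fun c _ => hball c).of_isClosed_subset isClosed_cthickening ?_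
  intro y hy
  have hy' := cthickening_subset_thickening' (by linarith) (by linarith : δ < (δ + ε) / 2) A hy
  rw [thickening_eq_biUnion_ball] at hy'
  obtain ⟨a, haA, hya⟩ := mem_iUnion₂.1 hy'
  obtain ⟨c, hct, hac⟩ := mem_iUnion₂.1 (hAt haA)
  refine mem_iUnion₂.2 ⟨c, hct, mem_closedBall.2 ?_⟩
  linarith [dist_triangle y a c, mem_ball.1 hya, mem_ball.1 hac]

theorem sigmaCompactSpace_of_forall_isCompact_closedBall [ConnectedSpace X] {ε : ℝ} (hε : 0 < ε)
    (hball : ∀ z : X, IsCompact (closedBall z ε)) : SigmaCompactSpace X := by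
  obtain ⟨x⟩ := ‹ConnectedSpace X›.toNonempty
  set K : ℕ → Set X := fun n => (cthickening (ε / 2))^[n] {x}
  have hK : ∀ n, IsCompact (K n) := by
    intro n
    induction n with
    | zero => exact isCompact_singleton
    | succ n ih =>
      simpa only [K, Function.iterate_succ_apply'] using
        ih.cthickening_of_forall_isCompact_closedBall hball (by positivity) (by linarith)
  refine ⟨⟨K, hK, eq_univ_of_forall_ball_subset (half_pos hε) ⟨x, mem_iUnion.2 ⟨0, rfl⟩⟩ ?_⟩⟩
  intro w hw v hv
  obtain ⟨n, hn⟩ := mem_iUnion.1 hw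
  refine mem_iUnion.2 ⟨n + 1, ?_⟩
  simp only [K, Function.iterate_succ_apply']
  exact ball_subset_closedBall.trans (closedBall_subset_cthickening hn _) hv

end ConnectedMetric

theorem exists_pos_forall_isCompact_closedBall {X : Type*} [PseudoMetricSpace X]
    [LocallyCompactSpace X] [Nonempty X] (hhom : ∀ x y : X, ∃ f : X ≃ᵢ X, f x = y) :
    ∃ ε > 0, ∀ z : X, IsCompact (closedBall z ε) := by
  obtain ⟨x⟩ := ‹Nonempty X›
  obtain ⟨K, hK, hKx⟩ := exists_compact_mem_nhds x
  obtain ⟨ε, hε, hεK⟩ := nhds_basis_closedBall.mem_iff.1 hKx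
  refine ⟨ε, hε, fun z => ?_⟩
  obtain ⟨f, rfl⟩ := hhom x z
  rw [← f.image_closedBall]
  exact (hK.of_isClosed_subset isClosed_closedBall hεK).image f.continuous

section ConnectedComponent

variable {G : Type*} [Group G] [TopologicalSpace G] [IsTopologicalGroup G]

instance Subgroup.normal_connectedComponentOfOne : (Subgroup.connectedComponentOfOne G).Normal :=
  ⟨fun n hn g => by
    have := ((continuous_mul_const g⁻¹).comp
      (continuous_const_mul g)).image_connectedComponent_subset (1 : G) ⟨n, hn, rfl⟩
    exact (by simpa using this : g * n * g⁻¹ ∈ connectedComponent (1 : G))⟩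

theorem totallyDisconnectedSpace_quotient_connectedComponentOfOne :
    TotallyDisconnectedSpace (G ⧸ Subgroup.connectedComponentOfOne G) := by
  set N := Subgroup.connectedComponentOfOne G
  have hfibers : ∀ q : G ⧸ N, IsConnected ((↑) ⁻¹' {q} : Set G) := by
    rintro ⟨w⟩
    have : ((↑) ⁻¹' {(w : G ⧸ N)} : Set G) = connectedComponent w := by
      rw [← image_singleton, QuotientGroup.preimage_image_mk_eq_mul, singleton_mul,
        ← mul_one w, ← smul_connectedComponent, mul_one]
      rfl
    exact this ▸ isConnected_connectedComponent
  rw [totallyDisconnectedSpace_iff_connectedComponent_one, ← QuotientGroup.mk_one,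
    ← (QuotientGroup.isQuotientMap_mk N).isCoinducing.image_connectedComponent hfibers]
  refine eq_singleton_iff_unique_mem.2 ⟨⟨1, mem_connectedComponent, rfl⟩, ?_⟩
  rintro _ ⟨n, hn, rfl⟩
  exact (QuotientGroup.eq_one_iff n).2 hn

theorem IsCompact.inter_connectedComponent_one_nonempty [LocallyCompactSpace G] {T : Set G}
    (hT : IsCompact T) (h : ∀ C : Set G, IsClopen C → 1 ∈ C → (T ∩ C).Nonempty) :
    (T ∩ connectedComponent 1).Nonempty := by
  set N := Subgroup.connectedComponentOfOne G
  have : IsClosed (N : Set G) := isClosed_connectedComponent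
  have := totallyDisconnectedSpace_quotient_connectedComponentOfOne (G := G)
  by_contra hTN
  have h1T : (1 : G ⧸ N) ∉ (↑) '' T := by
    rintro ⟨t, htT, ht⟩
    exact hTN ⟨t, htT, (QuotientGroup.eq_one_iff t).1 ht⟩
  obtain ⟨V, hV, h1V, hVT⟩ := loc_compact_Haus_tot_disc_of_zero_dim.mem_nhds_iff.1
    ((hT.image QuotientGroup.continuous_mk).isClosed.isOpen_compl.mem_nhds h1T)
  obtain ⟨t, htT, htV⟩ := h _ (hV.preimage QuotientGroup.continuous_mk) h1V
  exact hVT htV ⟨t, htT, rfl⟩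

end ConnectedComponent

section PointwiseConvergence

variable {α β γ : Type*} [PseudoEMetricSpace α] [PseudoEMetricSpace β]

theorem continuousOn_eval_setOf_lipschitzWith (K : ℝ≥0) :
    ContinuousOn (fun p : (α → β) × α => p.1 p.2) ({f | LipschitzWith K f} ×ˢ univ) :=
  continuousOn_prod_of_continuousOn_lipschitzOnWith' _ K
    (fun _ hf => lipschitzOnWith_univ.2 hf) (fun z _ => (continuous_apply z).continuousOn)

theorem continuousOn_comp_setOf_lipschitzWith (K : ℝ≥0) :
    ContinuousOn (fun p : (α → β) × (γ → α) => p.1 ∘ p.2) {p | LipschitzWith K p.1} :=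
  continuousOn_pi.2 fun z => by
    have h : Continuous fun p : (α → β) × (γ → α) => (p.1, p.2 z) := by fun_prop
    exact (continuousOn_eval_setOf_lipschitzWith K).comp h.continuousOn fun _ hp => ⟨hp, mem_univ _⟩

theorem isClosed_setOf_isometry : IsClosed {f : α → β | Isometry f} := by
  simp only [Isometry, ofPred_forall]
  exact isClosed_iInter fun x => isClosed_iInter fun y =>
    isClosed_eq ((continuous_apply x).edist (continuous_apply y)) continuous_const

end PointwiseConvergence

namespace IsometryEquiv

variable {M : Type*} [MetricSpace M]

instance : MulAction (M ≃ᵢ M) M where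
  smul g x := g x
  one_smul _ := rfl
  mul_smul _ _ _ := rfl

variable (M) in
abbrev pointwiseTopology : TopologicalSpace (M ≃ᵢ M) :=
  .induced (fun g : M ≃ᵢ M => (g : M → M)) Pi.topologicalSpace

section PointwiseTopology

attribute [local instance] pointwiseTopology

theorem isInducing_coeFn : IsInducing fun g : M ≃ᵢ M => (g : M → M) := ⟨rfl⟩

theorem continuous_eval_const (x : M) : Continuous fun g : M ≃ᵢ M => g x :=
  (continuous_apply x).comp isInducing_coeFn.continuous

instance : ContinuousSMul (M ≃ᵢ M) M := by
  have h : Continuous fun p : (M ≃ᵢ M) × M => ((p.1 : M → M), p.2) :=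
    isInducing_coeFn.continuous.prodMap continuous_id
  exact ⟨(continuousOn_eval_setOf_lipschitzWith 1).comp_continuous h
    fun p => ⟨p.1.isometry.lipschitz, mem_univ _⟩⟩

instance : IsTopologicalGroup (M ≃ᵢ M) where
  continuous_mul := isInducing_coeFn.continuous_iff.2 <| continuous_pi fun z =>
    continuous_fst.smul ((continuous_eval_const z).comp continuous_snd)
  continuous_inv := isInducing_coeFn.continuous_iff.2 <| continuous_pi fun z =>
    continuous_iff_continuousAt.2 fun g₀ => by
      have key (g : M ≃ᵢ M) : dist (g⁻¹ z) (g₀⁻¹ z) = dist (g (g₀⁻¹ z)) z := by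
        rw [← g.dist_eq, apply_inv_self, dist_comm]
      rw [ContinuousAt, tendsto_iff_dist_tendsto_zero]
      simpa [key] using
        ((continuous_eval_const (g₀⁻¹ z)).tendsto g₀).dist (tendsto_const_nhds (x := z))

/-- A pointwise limit of isometries need not be surjective; recording the inverses as well makes
the range closed. -/
theorem isClosedEmbedding_coeFn_coeFn_inv :
    IsClosedEmbedding fun g : M ≃ᵢ M => ((g : M → M), ((g⁻¹ : M ≃ᵢ M) : M → M)) := by
  refine ⟨⟨.of_comp (by fun_prop) continuous_fst isInducing_coeFn,
    fun g h hgh => DFunLike.coe_injective (congrArg Prod.fst hgh)⟩, ?_⟩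
  set L := {p : (M → M) × (M → M) | Isometry p.1 ∧ Isometry p.2}
  have hrange : range (fun g : M ≃ᵢ M => ((g : M → M), ((g⁻¹ : M ≃ᵢ M) : M → M))) =
      L ∩ (fun p => (p.1 ∘ p.2, p.2 ∘ p.1)) ⁻¹' {(id, id)} := by
    ext p
    constructor
    · rintro ⟨g, rfl⟩
      exact ⟨⟨g.isometry, g⁻¹.isometry⟩, by ext <;> simp⟩
    · rintro ⟨⟨h₁, h₂⟩, hp⟩
      simp only [mem_preimage, mem_singleton_iff, Prod.mk.injEq] at hp
      exact ⟨⟨⟨p.1, p.2, congrFun hp.2, congrFun hp.1⟩, h₁⟩, rfl⟩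
  rw [hrange]
  refine ContinuousOn.preimage_isClosed_of_isClosed ?_
    ((isClosed_setOf_isometry.preimage continuous_fst).inter
      (isClosed_setOf_isometry.preimage continuous_snd)) isClosed_singleton
  exact ((continuousOn_comp_setOf_lipschitzWith 1).mono fun p hp => hp.1.lipschitz).prodMk
    ((continuousOn_comp_setOf_lipschitzWith 1).comp continuous_swap.continuousOn
      fun p hp => hp.2.lipschitz)

section UniformlyCompactBalls

variable [ConnectedSpace M] {ε : ℝ}

theorem exists_isCompact_forall_apply_mem (hε : 0 < ε)
    (hball : ∀ z : M, IsCompact (closedBall z ε)) (x y w : M) :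
    ∃ C, IsCompact C ∧ ∀ g : M ≃ᵢ M, dist (g x) y ≤ ε → g w ∈ C := by
  set S := {w : M | ∃ C, IsCompact C ∧ ∀ g : M ≃ᵢ M, dist (g x) y ≤ ε → g w ∈ C}
  have hS : S = univ := by
    refine eq_univ_of_forall_ball_subset (half_pos hε) ⟨x, closedBall y ε, hball y, fun _ => id⟩ ?_
    rintro w ⟨C, hC, hgC⟩ v hv
    refine ⟨cthickening (ε / 2) C,
      hC.cthickening_of_forall_isCompact_closedBall hball (by positivity) (by linarith),
      fun g hg => mem_cthickening_of_dist_le _ _ _ _ (hgC g hg) ?_⟩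
    rw [g.dist_eq]
    exact (mem_ball.1 hv).le
  exact hS.ge (mem_univ w)

theorem isCompact_setOf_dist_apply_le (hε : 0 < ε)
    (hball : ∀ z : M, IsCompact (closedBall z ε)) (x y : M) :
    IsCompact {g : M ≃ᵢ M | dist (g x) y ≤ ε} := by
  choose C hC hgC using exists_isCompact_forall_apply_mem hε hball x y
  choose C' hC' hgC' using exists_isCompact_forall_apply_mem hε hball y x
  refine (isClosedEmbedding_coeFn_coeFn_inv.isCompact_preimage
    ((isCompact_univ_pi hC).prod (isCompact_univ_pi hC'))).of_isClosed_subset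
    (isClosed_le ((continuous_eval_const x).dist continuous_const) continuous_const) ?_
  intro g hg
  refine ⟨fun w _ => hgC w g hg, fun w _ => hgC' w g⁻¹ ?_⟩
  rwa [← g.dist_eq, apply_inv_self, dist_comm]

theorem locallyCompactSpace_of_forall_isCompact_closedBall (hε : 0 < ε)
    (hball : ∀ z : M, IsCompact (closedBall z ε)) : LocallyCompactSpace (M ≃ᵢ M) := by
  obtain ⟨x⟩ := ‹ConnectedSpace M›.toNonempty
  refine (isCompact_setOf_dist_apply_le hε hball x x).locallyCompactSpace_of_mem_nhds_of_group
    (x := 1) ?_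
  exact ((continuous_eval_const x).continuousAt (x := 1)).preimage_mem_nhds
    (by simpa using closedBall_mem_nhds x hε)

theorem sigmaCompactSpace_of_forall_isCompact_closedBall (hε : 0 < ε)
    (hball : ∀ z : M, IsCompact (closedBall z ε)) : SigmaCompactSpace (M ≃ᵢ M) := by
  have := _root_.sigmaCompactSpace_of_forall_isCompact_closedBall hε hball
  obtain ⟨x⟩ := ‹ConnectedSpace M›.toNonempty
  obtain ⟨d, hd⟩ := TopologicalSpace.exists_dense_seq M
  refine ⟨⟨fun n => {g | dist (g x) (d n) ≤ ε},
    fun n => isCompact_setOf_dist_apply_le hε hball x (d n), eq_univ_of_forall fun g => ?_⟩⟩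
  obtain ⟨n, hn⟩ := hd.exists_dist_lt (g x) hε
  exact mem_iUnion.2 ⟨n, hn.le⟩

theorem isProperMap_apply (hε : 0 < ε) (hball : ∀ z : M, IsCompact (closedBall z ε)) (x : M) :
    IsProperMap fun g : M ≃ᵢ M => g x := by
  refine isProperMap_iff_isCompact_preimage.2 ⟨continuous_eval_const x, fun L hL => ?_⟩
  obtain ⟨t, -, ht, hLt⟩ := finite_cover_balls_of_compact hL hε
  refine (ht.isCompact_biUnion fun c _ => isCompact_setOf_dist_apply_le hε hball x c)
    |>.of_isClosed_subset (hL.isClosed.preimage (continuous_eval_const x)) fun g hg => ?_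
  obtain ⟨c, hc, hgc⟩ := mem_iUnion₂.1 (hLt hg)
  exact mem_iUnion₂.2 ⟨c, hc, (mem_ball.1 hgc).le⟩

end UniformlyCompactBalls

end PointwiseTopology

end IsometryEquiv

/-- the connected component of the identity of the isometry
group of a homogeneous metric space (with the topology of pointwise
convergence) acts transitively. -/
theorem statement14 (M : Type*) [MetricSpace M] [ConnectedSpace M] [LocallyCompactSpace M]
    (hhom : ∀ x y : M, ∃ f : M ≃ᵢ M, f x = y) :
    letI : TopologicalSpace (M ≃ᵢ M) :=
      TopologicalSpace.induced (fun f : M ≃ᵢ M => (⇑f : M → M)) Pi.topologicalSpace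
    ∀ x y : M, ∃ g ∈ connectedComponent (1 : M ≃ᵢ M), g x = y := by
  let _ := IsometryEquiv.pointwiseTopology M
  intro x y
  obtain ⟨ε, hε, hball⟩ := exists_pos_forall_isCompact_closedBall hhom
  have := IsometryEquiv.locallyCompactSpace_of_forall_isCompact_closedBall hε hball
  have := IsometryEquiv.sigmaCompactSpace_of_forall_isCompact_closedBall hε hball
  have : MulAction.IsPretransitive (M ≃ᵢ M) M := ⟨hhom⟩
  have hproper := IsometryEquiv.isProperMap_apply hε hball x
  have hopen : IsOpenMap fun g : M ≃ᵢ M => g x := isOpenMap_smul_of_sigmaCompact x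
  have hfiber : IsCompact {g : M ≃ᵢ M | g x = y} := hproper.isCompact_preimage isCompact_singleton
  obtain ⟨g, hgx, hg1⟩ := hfiber.inter_connectedComponent_one_nonempty fun C hC h1C => by
    have hCx : (fun g : M ≃ᵢ M => g x) '' C = univ :=
      IsClopen.eq_univ ⟨hproper.isClosedMap _ hC.1, hopen _ hC.2⟩ ⟨x, 1, h1C, rfl⟩
    obtain ⟨g, hgC, hgx⟩ := hCx.symm ▸ mem_univ y
    exact ⟨g, hgx, hgC⟩
  exact ⟨g, hg1, hgx⟩
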